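/- arXiv:1509.02249 — 2 statements merged into one kernel-verified Lean document; each statement's English description precedes it below -/
import Mathlib

section
/- Let n ≥ 1 and ℓ ≥ 1 be integers and let p be a real number with 0 < p ≤ 1/2; set q := 1 − p and α := p/q. Then μ_p(ddot{F}^ℓ) ≤ α^{ℓ+1}. -/
open Finset

open scoped Classical

noncomputable section

/-- The `p`-weight of a family of subsets of `[n] = {1,…,n}`. -/
def mu (n : ℕ) (p : ℝ) (𝓕 : Finset (Finset ℕ)) : ℝ :=
  ∑ F ∈ 𝓕, p ^ F.card * (1 - p) ^ (n - F.card)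

/-- Two families are cross `t`-intersecting. -/
def CrossIntersecting (t : ℕ) (𝓐 𝓑 : Finset (Finset ℕ)) : Prop :=
  ∀ A ∈ 𝓐, ∀ B ∈ 𝓑, t ≤ (A ∩ B).card

/-- The Frankl family `F_i^ℓ = {F ⊆ [n] : |F ∩ [ℓ+2i]| ≥ ℓ+i}`. -/
def FF (n ℓ i : ℕ) : Finset (Finset ℕ) :=
  (Finset.Icc 1 n).powerset.filter fun F => ℓ + i ≤ (F ∩ Finset.Icc 1 (ℓ + 2 * i)).card

/-- `F` reaches level `ℓ`: there is `0 ≤ j ≤ n` with `2|F ∩ [j]| ≥ j + ℓ`. -/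
def Reaches (n ℓ : ℕ) (F : Finset ℕ) : Prop :=
  ∃ j ≤ n, j + ℓ ≤ 2 * (F ∩ Finset.Icc 1 j).card

/-- The number of steps `0 ≤ j ≤ n` at which `F` hits level `ℓ`, i.e. `2|F ∩ [j]| = j + ℓ`. -/
def hitCount (n ℓ : ℕ) (F : Finset ℕ) : ℕ :=
  ((Finset.range (n + 1)).filter fun j => 2 * (F ∩ Finset.Icc 1 j).card = j + ℓ).card

/-- `F^ℓ`: all subsets of `[n]` reaching level `ℓ`. -/
def Fwalk (n ℓ : ℕ) : Finset (Finset ℕ) :=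
  (Finset.Icc 1 n).powerset.filter fun F => Reaches n ℓ F

/-- `tilde F^ℓ`: all subsets of `[n]` reaching level `ℓ+1`. -/
def Ftilde (n ℓ : ℕ) : Finset (Finset ℕ) :=
  (Finset.Icc 1 n).powerset.filter fun F => Reaches n (ℓ + 1) F

/-- `hat F^ℓ`: subsets not reaching level `ℓ+1` and hitting level `ℓ` exactly once. -/
def Fhat (n ℓ : ℕ) : Finset (Finset ℕ) :=
  (Finset.Icc 1 n).powerset.filter fun F => ¬ Reaches n (ℓ + 1) F ∧ hitCount n ℓ F = 1

/-- `ddot F^ℓ`: subsets not reaching level `ℓ+1` and hitting level `ℓ` at least twice. -/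
def Fddot (n ℓ : ℕ) : Finset (Finset ℕ) :=
  (Finset.Icc 1 n).powerset.filter fun F => ¬ Reaches n (ℓ + 1) F ∧ 2 ≤ hitCount n ℓ F

/-- The `(i,j)`-shift of a single set `F`, relative to the family `𝓕`. -/
def shiftSet (i j : ℕ) (𝓕 : Finset (Finset ℕ)) (F : Finset ℕ) : Finset ℕ :=
  if j ∈ F ∧ i ∉ F ∧ insert i (F.erase j) ∉ 𝓕 then insert i (F.erase j) else F

/-- The `(i,j)`-shift `s_{ij}(𝓕)` of a family `𝓕`. -/
def shiftFam (i j : ℕ) (𝓕 : Finset (Finset ℕ)) : Finset (Finset ℕ) :=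
  𝓕.image (shiftSet i j 𝓕)

/-- A family is shifted if all shifts `s_{ij}`, `1 ≤ i < j ≤ n`, fix it. -/
def Shifted (n : ℕ) (𝓕 : Finset (Finset ℕ)) : Prop :=
  ∀ i j : ℕ, 1 ≤ i → i < j → j ≤ n → shiftFam i j 𝓕 = 𝓕

/-- A family of subsets of `[n]` is inclusion maximal. -/
def InclMax (n : ℕ) (𝓕 : Finset (Finset ℕ)) : Prop :=
  ∀ F ∈ 𝓕, ∀ F' : Finset ℕ, F ⊆ F' → F' ⊆ Finset.Icc 1 n → F' ∈ 𝓕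

/-- `λ(𝓕)`: the largest `λ ≥ 0` such that every member of `𝓕` reaches level `λ`. -/
def lam (n : ℕ) (𝓕 : Finset (Finset ℕ)) : ℕ :=
  Nat.findGreatest (fun ℓ => ∀ F ∈ 𝓕, Reaches n ℓ F) n

/-- Two families of subsets of `[n]` are isomorphic via a permutation of `[n]`. -/
def Isom (n : ℕ) (𝓖₁ 𝓖₂ : Finset (Finset ℕ)) : Prop :=
  ∃ σ : Equiv.Perm ℕ, (∀ k ∈ Finset.Icc 1 n, σ k ∈ Finset.Icc 1 n) ∧
    𝓖₁ = 𝓖₂.image fun G => G.image σ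

/-- The quantity `f(ℓ, i, p)` from Ahlswede–Khachatrian type estimates. -/
def fLP (ℓ i : ℕ) (p : ℝ) : ℝ :=
  (p / (1 - p)) ^ (ℓ + 1) +
    (Nat.choose (ℓ + 2 * i) i : ℝ) * ((ℓ + 1 : ℝ) / (ℓ + i + 1)) * p ^ (ℓ + i) *
      (1 - p) ^ i * (1 - p / (1 - p))

/-- The walk `D_s^t(i) = [t−1] ∪ {t+s,…,t+2s} ∪ {t+2s+i+2k : k ≥ 1} ∩ [n]`. -/
def DD (n t s i : ℕ) : Finset ℕ :=
  Finset.Icc 1 (t - 1) ∪ Finset.Icc (t + s) (t + 2 * s) ∪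
    ((Finset.Icc 1 n).filter fun m => ∃ k ∈ Finset.Icc 1 n, m = t + 2 * s + i + 2 * k)

end

/-! Read `F ⊆ [n]` as a walk with an up-step at each element of `F`. Adding to `F ∈ ddot F^ℓ` the
step right after its first visit to level `ℓ` lifts its later visit to level `ℓ + 2`, and gives an
injection `ddot F^ℓ → F^{ℓ+2}` multiplying `p`-weights by `α`. The weight of `F^m` is at most
`α^m`: splitting on the first step, `μ(F^{m+1}) = p μ(F^m) + q μ(F^{m+2})`, and `α^m` satisfies
this recursion with equality. Hence `α μ(ddot F^ℓ) ≤ α^{ℓ+2}`. -/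

section Weight

variable {p : ℝ}

lemma mu_mono (hp0 : 0 ≤ p) (hp1 : p ≤ 1) (n : ℕ) {𝓐 𝓑 : Finset (Finset ℕ)} (h : 𝓐 ⊆ 𝓑) :
    mu n p 𝓐 ≤ mu n p 𝓑 :=
  sum_le_sum_of_subset_of_nonneg h fun _ _ _ => by
    have : 0 ≤ 1 - p := by linarith
    positivity

lemma mu_le_one_of_subset_powerset (hp0 : 0 ≤ p) (hp1 : p ≤ 1) {s : Finset ℕ}
    {𝓕 : Finset (Finset ℕ)} (h : 𝓕 ⊆ s.powerset) : mu #s p 𝓕 ≤ 1 := by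
  refine (mu_mono hp0 hp1 _ h).trans_eq ?_
  rw [mu, sum_pow_mul_eq_add_pow]
  simp

lemma mu_image_eq_of_card_succ (hp1 : p < 1) {n : ℕ} {𝓕 : Finset (Finset ℕ)}
    {f : Finset ℕ → Finset ℕ} (hf : Set.InjOn f 𝓕) (hcard : ∀ F ∈ 𝓕, #(f F) = #F + 1)
    (hlt : ∀ F ∈ 𝓕, #F < n) :
    mu n p (𝓕.image f) = p / (1 - p) * mu n p 𝓕 := by
  have hq : 1 - p ≠ 0 := by linarith
  rw [mu, sum_image hf, mu, mul_sum]
  refine sum_congr rfl fun F hF => ?_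
  obtain ⟨k, hk⟩ : ∃ k, n - #F = k + 1 := ⟨n - #F - 1, by have := hlt F hF; omega⟩
  rw [hcard F hF, show n - (#F + 1) = k by omega, hk, pow_succ, pow_succ]
  field_simp

end Weight

section Walk

/-- `F ⊆ (a, a + k]` read as a walk of `k` steps started after step `a`, which climbs `m` above its
starting height. -/
def ReachesFrom (a k m : ℕ) (F : Finset ℕ) : Prop :=
  ∃ j ≤ k, j + m ≤ 2 * #(F ∩ Icc (a + 1) (a + j))

noncomputable def walkFamily (a k m : ℕ) : Finset (Finset ℕ) :=
  (Icc (a + 1) (a + k)).powerset.filter (ReachesFrom a k m)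

lemma Fwalk_eq_walkFamily (n m : ℕ) : Fwalk n m = walkFamily 0 n m := by
  unfold Fwalk walkFamily Reaches ReachesFrom
  simp only [zero_add]
  congr

lemma Icc_add_succ_eq_insert (a j : ℕ) :
    Icc (a + 1) (a + (j + 1)) = insert (a + 1) (Icc (a + 1 + 1) (a + 1 + j)) := by
  rw [insert_Icc_add_one_left_eq_Icc (by omega)]
  congr 1
  omega

lemma reachesFrom_succ_iff {a k m : ℕ} {F : Finset ℕ} :
    ReachesFrom a (k + 1) (m + 1) F ↔
      ∃ j ≤ k, j + (m + 2) ≤ 2 * #(F ∩ insert (a + 1) (Icc (a + 1 + 1) (a + 1 + j))) := by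
  constructor
  · rintro ⟨_ | j, hj, h⟩
    · simp at h
    · exact ⟨j, by omega, by rw [← Icc_add_succ_eq_insert]; omega⟩
  · rintro ⟨j, hj, h⟩
    exact ⟨j + 1, by omega, by rw [Icc_add_succ_eq_insert]; omega⟩

lemma reachesFrom_succ_iff_of_notMem {a k m : ℕ} {F : Finset ℕ} (ha : a + 1 ∉ F) :
    ReachesFrom a (k + 1) (m + 1) F ↔ ReachesFrom (a + 1) k (m + 2) F := by
  rw [reachesFrom_succ_iff]
  simp only [inter_insert_of_notMem ha, ReachesFrom]

lemma reachesFrom_succ_insert_iff {a k m : ℕ} {F : Finset ℕ} (ha : a + 1 ∉ F) :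
    ReachesFrom a (k + 1) (m + 1) (insert (a + 1) F) ↔ ReachesFrom (a + 1) k m F := by
  rw [reachesFrom_succ_iff]
  simp only [← insert_inter_distrib, card_insert_of_notMem fun h => ha (mem_inter.1 h).1,
    ReachesFrom]
  exact exists_congr fun j => and_congr_right fun _ => by omega

variable {p : ℝ}

lemma mu_walkFamily_succ (a k m : ℕ) :
    mu (k + 1) p (walkFamily a (k + 1) (m + 1)) =
      p * mu k p (walkFamily (a + 1) k m) + (1 - p) * mu k p (walkFamily (a + 1) k (m + 2)) := by
  have ha : a + 1 ∉ Icc (a + 1 + 1) (a + 1 + k) := by simp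
  simp only [mu, walkFamily, sum_filter]
  rw [Icc_add_succ_eq_insert, sum_powerset_insert ha, add_comm, mul_sum, mul_sum]
  congr 1 <;> refine sum_congr rfl fun F hF => ?_
  all_goals
    have hsub := mem_powerset.1 hF
    have hF : a + 1 ∉ F := fun h => ha (hsub h)
    have hcard : #F ≤ k := by simpa using card_le_card hsub
  · rw [reachesFrom_succ_insert_iff hF, card_insert_of_notMem hF, Nat.succ_sub_succ]
    split_ifs <;> ring
  · rw [reachesFrom_succ_iff_of_notMem hF, Nat.succ_sub hcard, pow_succ]
    split_ifs <;> ring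

lemma mu_walkFamily_le_one (hp0 : 0 ≤ p) (hp1 : p ≤ 1) (a k m : ℕ) :
    mu k p (walkFamily a k m) ≤ 1 := by
  have h := mu_le_one_of_subset_powerset (𝓕 := walkFamily a k m) (s := Icc (a + 1) (a + k))
    hp0 hp1 (filter_subset _ _)
  simpa using h

theorem mu_walkFamily_le (hp : 0 < p) (hp1 : p < 1) (a k m : ℕ) :
    mu k p (walkFamily a k m) ≤ (p / (1 - p)) ^ m := by
  have hq : 0 < 1 - p := by linarith
  induction k generalizing a m with
  | zero =>
    rcases m with _ | m
    · simpa using mu_walkFamily_le_one hp.le hp1.le a 0 0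
    · have : walkFamily a 0 (m + 1) = ∅ := by
        refine filter_false_of_mem fun F _ ⟨j, hj, h⟩ => ?_
        obtain rfl : j = 0 := by omega
        simp at h
      simp only [this, mu, sum_empty]
      positivity
  | succ k ih =>
    rcases m with _ | m
    · simpa using mu_walkFamily_le_one hp.le hp1.le a (k + 1) 0
    · have hstep : p * (p / (1 - p)) ^ m + (1 - p) * (p / (1 - p)) ^ (m + 2) =
          (p / (1 - p)) ^ (m + 1) := by
        have hα : (1 - p) * (p / (1 - p)) = p := by field_simp
        linear_combination ((p / (1 - p)) ^ (m + 1) - (p / (1 - p)) ^ m) * hα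
      rw [mu_walkFamily_succ, ← hstep]
      gcongr
      · exact ih (a + 1) m
      · exact ih (a + 1) (m + 2)

theorem mu_Fwalk_le (hp : 0 < p) (hp1 : p < 1) (n m : ℕ) :
    mu n p (Fwalk n m) ≤ (p / (1 - p)) ^ m := by
  rw [Fwalk_eq_walkFamily]
  exact mu_walkFamily_le hp hp1 0 n m

end Walk

section FirstHit

variable {n ℓ : ℕ} {F : Finset ℕ}

lemma card_inter_Icc_succ (F : Finset ℕ) (j : ℕ) :
    #(F ∩ Icc 1 (j + 1)) = #(F ∩ Icc 1 j) + if j + 1 ∈ F then 1 else 0 := by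
  rw [← insert_Icc_right_eq_Icc_add_one (by omega)]
  split_ifs with h
  · rw [inter_insert_of_mem h, card_insert_of_notMem (by simp)]
  · rw [inter_insert_of_notMem h, add_zero]

lemma card_insert_inter_Icc {x : ℕ} (hx : x ∉ F) (hx1 : 1 ≤ x) (i : ℕ) :
    #(insert x F ∩ Icc 1 i) = #(F ∩ Icc 1 i) + if x ≤ i then 1 else 0 := by
  split_ifs with h
  · rw [insert_inter_of_mem (mem_Icc.2 ⟨hx1, h⟩),
      card_insert_of_notMem fun h' => hx (mem_inter.1 h').1]
  · rw [insert_inter_of_notMem fun h' => h (mem_Icc.1 h').2, add_zero]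

lemma two_mul_card_inter_Icc_le (hF : F ∈ Fddot n ℓ) {j : ℕ} (hj : j ≤ n) :
    2 * #(F ∩ Icc 1 j) ≤ j + ℓ := by
  by_contra h
  exact (mem_filter.1 hF).2.1 ⟨j, hj, by omega⟩

noncomputable def firstHit (n ℓ : ℕ) (F : Finset ℕ) : ℕ :=
  sInf {j | j ≤ n ∧ 2 * #(F ∩ Icc 1 j) = j + ℓ}

lemma firstHit_spec (hF : F ∈ Fddot n ℓ) :
    2 * #(F ∩ Icc 1 (firstHit n ℓ F)) = firstHit n ℓ F + ℓ ∧
      ∃ j ≤ n, firstHit n ℓ F < j ∧ 2 * #(F ∩ Icc 1 j) = j + ℓ := by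
  obtain ⟨a, ha, b, hb, hab⟩ := one_lt_card.1 (mem_filter.1 hF).2.2
  simp only [mem_filter, mem_range] at ha hb
  have ha' : a ∈ {j | j ≤ n ∧ 2 * #(F ∩ Icc 1 j) = j + ℓ} := ⟨by omega, ha.2⟩
  have hb' : b ∈ {j | j ≤ n ∧ 2 * #(F ∩ Icc 1 j) = j + ℓ} := ⟨by omega, hb.2⟩
  have hfa : firstHit n ℓ F ≤ a := Nat.sInf_le ha'
  have hfb : firstHit n ℓ F ≤ b := Nat.sInf_le hb'
  refine ⟨(Nat.sInf_mem ⟨a, ha'⟩).2, ?_⟩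
  rcases eq_or_ne a (firstHit n ℓ F) with rfl | hne
  · exact ⟨b, hb'.1, by omega, hb'.2⟩
  · exact ⟨a, ha'.1, by omega, ha'.2⟩

lemma firstHit_lt (hF : F ∈ Fddot n ℓ) : firstHit n ℓ F < n := by
  obtain ⟨-, j, hj, hlt, -⟩ := firstHit_spec hF
  omega

lemma firstHit_succ_notMem (hF : F ∈ Fddot n ℓ) : firstHit n ℓ F + 1 ∉ F := by
  intro h
  have hsucc := card_inter_Icc_succ F (firstHit n ℓ F)
  rw [if_pos h] at hsucc
  have hle := two_mul_card_inter_Icc_le (j := firstHit n ℓ F + 1) hF (firstHit_lt hF)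
  have hhit := (firstHit_spec hF).1
  omega

/-- The added step is recovered as the first time the new set reaches level `ℓ + 1`, which makes
`raise n ℓ` injective on `Fddot n ℓ`. -/
noncomputable def raise (n ℓ : ℕ) (F : Finset ℕ) : Finset ℕ :=
  insert (firstHit n ℓ F + 1) F

lemma card_raise (hF : F ∈ Fddot n ℓ) : #(raise n ℓ F) = #F + 1 :=
  card_insert_of_notMem (firstHit_succ_notMem hF)

lemma card_raise_inter_Icc (hF : F ∈ Fddot n ℓ) (i : ℕ) :
    #(raise n ℓ F ∩ Icc 1 i) = #(F ∩ Icc 1 i) + if firstHit n ℓ F + 1 ≤ i then 1 else 0 :=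
  card_insert_inter_Icc (firstHit_succ_notMem hF) (by omega) i

lemma raise_mem_Fwalk (hF : F ∈ Fddot n ℓ) : raise n ℓ F ∈ Fwalk n (ℓ + 2) := by
  obtain ⟨-, j, hj, hlt, hhit⟩ := firstHit_spec hF
  have hsub : raise n ℓ F ⊆ Icc 1 n :=
    insert_subset (mem_Icc.2 ⟨by omega, firstHit_lt hF⟩) (mem_powerset.1 (mem_filter.1 hF).1)
  refine mem_filter.2 ⟨mem_powerset.2 hsub, j, hj, ?_⟩
  rw [card_raise_inter_Icc hF, if_pos (by omega)]
  omega

lemma card_lt_of_mem_Fddot (hF : F ∈ Fddot n ℓ) : #F < n := by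
  have h := card_le_card (mem_powerset.1 (mem_filter.1 (raise_mem_Fwalk hF)).1)
  rw [card_raise hF, Nat.card_Icc] at h
  omega

lemma firstHit_le_of_raise_eq {F' : Finset ℕ} (hF : F ∈ Fddot n ℓ) (hF' : F' ∈ Fddot n ℓ)
    (h : raise n ℓ F = raise n ℓ F') : firstHit n ℓ F ≤ firstHit n ℓ F' := by
  by_contra! hlt
  have h1 := card_raise_inter_Icc hF (firstHit n ℓ F' + 1)
  have h2 := card_raise_inter_Icc hF' (firstHit n ℓ F' + 1)
  have hsucc := card_inter_Icc_succ F' (firstHit n ℓ F')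
  rw [if_neg (firstHit_succ_notMem hF')] at hsucc
  have hle := two_mul_card_inter_Icc_le (j := firstHit n ℓ F' + 1) hF (firstHit_lt hF')
  have hhit := (firstHit_spec hF').1
  rw [h] at h1
  split_ifs at h1 h2 <;> omega

lemma raise_injOn : Set.InjOn (raise n ℓ) (Fddot n ℓ) := by
  intro F hF F' hF' h
  have hj : firstHit n ℓ F = firstHit n ℓ F' :=
    le_antisymm (firstHit_le_of_raise_eq hF hF' h) (firstHit_le_of_raise_eq hF' hF h.symm)
  calc F = (raise n ℓ F).erase (firstHit n ℓ F + 1) := (erase_insert (firstHit_succ_notMem hF)).symm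
    _ = (raise n ℓ F').erase (firstHit n ℓ F' + 1) := by rw [h, hj]
    _ = F' := erase_insert (firstHit_succ_notMem hF')

end FirstHit

theorem statement_3_general (n ℓ : ℕ) (p : ℝ)
    (hp : 0 < p) (hp' : p ≤ 1 / 2) :
    mu n p (Fddot n ℓ) ≤ (p / (1 - p)) ^ (ℓ + 1) := by
  have hp1 : p < 1 := by linarith
  have hα : 0 < p / (1 - p) := div_pos hp (by linarith)
  have key : p / (1 - p) * mu n p (Fddot n ℓ) ≤ p / (1 - p) * (p / (1 - p)) ^ (ℓ + 1) :=
    calc p / (1 - p) * mu n p (Fddot n ℓ) = mu n p ((Fddot n ℓ).image (raise n ℓ)) :=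
          (mu_image_eq_of_card_succ hp1 raise_injOn (fun _ => card_raise)
            (fun _ => card_lt_of_mem_Fddot)).symm
      _ ≤ mu n p (Fwalk n (ℓ + 2)) :=
          mu_mono hp.le hp1.le n (image_subset_iff.2 fun _ => raise_mem_Fwalk)
      _ ≤ (p / (1 - p)) ^ (ℓ + 2) := mu_Fwalk_le hp hp1 n (ℓ + 2)
      _ = p / (1 - p) * (p / (1 - p)) ^ (ℓ + 1) := by ring
  exact le_of_mul_le_mul_left key hα

/-- `μ_p(ddot F^ℓ) ≤ α^{ℓ+1}`. -/
theorem statement_3 (n ℓ : ℕ) (hn : 1 ≤ n) (hl : 1 ≤ ℓ) (p : ℝ)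
    (hp : 0 < p) (hp' : p ≤ 1 / 2) :
    mu n p (Fddot n ℓ) ≤ (p / (1 - p)) ^ (ℓ + 1) :=
  statement_3_general n ℓ p hp hp'
end

section
/- Let t ≥ 1 and n ≥ t be integers. If A, B ⊆ 2^[n] are nonempty, shifted, inclusion maximal, cross t-intersecting families, then λ(A) + λ(B) ≥ 2t. -/
open Finset

open scoped Classical

/- ### Auxiliary lemmas -/

lemma aux_reaches_zero (n : ℕ) (F : Finset ℕ) : Reaches n 0 F :=
  ⟨0, Nat.zero_le n, by simp⟩

lemma aux_le_lam {n ℓ : ℕ} {𝓕 : Finset (Finset ℕ)} (hℓ : ℓ ≤ n)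
    (h : ∀ F ∈ 𝓕, Reaches n ℓ F) : ℓ ≤ lam n 𝓕 :=
  Nat.le_findGreatest hℓ h

lemma aux_lam_le {n : ℕ} (𝓕 : Finset (Finset ℕ)) : lam n 𝓕 ≤ n :=
  Nat.findGreatest_le n

lemma aux_lam_witness {n : ℕ} {𝓕 : Finset (Finset ℕ)} (h : lam n 𝓕 < n) :
    ∃ F ∈ 𝓕, ¬ Reaches n (lam n 𝓕 + 1) F := by
  have := Nat.findGreatest_is_greatest (P := fun ℓ => ∀ F ∈ 𝓕, Reaches n ℓ F)
    (Nat.lt_succ_self (lam n 𝓕)) (by omega)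
  push_neg at this
  simpa [Nat.succ_eq_add_one] using this

lemma aux_reaches_card {n t : ℕ} {F : Finset ℕ} (hcard : t ≤ F.card)
    (hsub : F ⊆ Finset.Icc 1 n) : Reaches n (2 * t - n) F := by
  by_cases h : 2 * t ≤ n
  · have : 2 * t - n = 0 := by omega
    rw [this]; exact aux_reaches_zero n F
  · refine ⟨n, le_rfl, ?_⟩
    rw [Finset.inter_eq_left.mpr hsub]
    omega

lemma aux_mem_of_shift {n : ℕ} {𝓐 : Finset (Finset ℕ)} (hS : Shifted n 𝓐)
    {F : Finset ℕ} (hF : F ∈ 𝓐) {i j : ℕ} (hi : 1 ≤ i) (hij : i < j) (hj : j ≤ n)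
    (hjF : j ∈ F) (hiF : i ∉ F) : insert i (F.erase j) ∈ 𝓐 := by
  by_contra h
  have hfix := hS i j hi hij hj
  have hmem : shiftSet i j 𝓐 F ∈ shiftFam i j 𝓐 := Finset.mem_image_of_mem _ hF
  rw [hfix] at hmem
  have heq : shiftSet i j 𝓐 F = insert i (F.erase j) := if_pos ⟨hjF, hiF, h⟩
  rw [heq] at hmem
  exact h hmem

/-- The compression lemma: a shifted, inclusion-maximal family containing `A₀`
contains every subset of `[n]` whose prefix counts dominate those of `A₀`. -/
lemma aux_compression (n : ℕ) (𝓐 : Finset (Finset ℕ)) (hS : Shifted n 𝓐)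
    (hM : InclMax n 𝓐) (A' : Finset ℕ) (hA'sub : A' ⊆ Finset.Icc 1 n) :
    ∀ m : ℕ, ∀ A₀ : Finset ℕ, A₀ ∈ 𝓐 → A₀ ⊆ Finset.Icc 1 n →
      (∀ j, j ≤ n → (A₀ ∩ Finset.Icc 1 j).card ≤ (A' ∩ Finset.Icc 1 j).card) →
      (∑ j ∈ Finset.range (n + 1),
        ((A' ∩ Finset.Icc 1 j).card - (A₀ ∩ Finset.Icc 1 j).card)) ≤ m →
      A' ∈ 𝓐 := by
  intro m
  induction m using Nat.strong_induction_on with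
  | _ m ih =>
  intro A₀ hA₀mem hsub hdom hmeas
  by_cases heq : A₀ = A'
  · exact heq ▸ hA₀mem
  -- compare cardinalities
  have hcn : (A₀ ∩ Finset.Icc 1 n).card = A₀.card := by
    rw [Finset.inter_eq_left.mpr hsub]
  have hcn' : (A' ∩ Finset.Icc 1 n).card = A'.card := by
    rw [Finset.inter_eq_left.mpr hA'sub]
  have hcardle : A₀.card ≤ A'.card := by
    have := hdom n le_rfl; omega
  rcases lt_or_eq_of_le hcardle with hcard | hcard
  · -- add the largest element of A' \ A₀
    have hne : (A' \ A₀).Nonempty := by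
      rw [Finset.sdiff_nonempty]
      intro hsub2
      exact absurd (Finset.card_le_card hsub2) (by omega)
    set x := (A' \ A₀).max' hne with hxdef
    have hxmem := (A' \ A₀).max'_mem hne
    have hxA' : x ∈ A' := (Finset.mem_sdiff.mp hxmem).1
    have hxA₀ : x ∉ A₀ := (Finset.mem_sdiff.mp hxmem).2
    have hxIcc := hA'sub hxA'
    have hx1 : 1 ≤ x := (Finset.mem_Icc.mp hxIcc).1
    have hxn : x ≤ n := (Finset.mem_Icc.mp hxIcc).2
    have hstrict : ∀ j, x ≤ j → j ≤ n →
        (A₀ ∩ Finset.Icc 1 j).card < (A' ∩ Finset.Icc 1 j).card := by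
      intro j hxj hjn
      have hsub2 : A' \ Finset.Icc 1 j ⊆ A₀ \ Finset.Icc 1 j := by
        intro y hy
        rw [Finset.mem_sdiff] at hy ⊢
        refine ⟨?_, hy.2⟩
        by_contra hyA₀
        have hy' : y ∈ A' \ A₀ := Finset.mem_sdiff.mpr ⟨hy.1, hyA₀⟩
        have hyx : y ≤ x := Finset.le_max' _ _ hy'
        have hy1 : 1 ≤ y := (Finset.mem_Icc.mp (hA'sub hy.1)).1
        exact hy.2 (Finset.mem_Icc.mpr ⟨hy1, le_trans hyx hxj⟩)
      have h1 := Finset.card_inter_add_card_sdiff A' (Finset.Icc 1 j)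
      have h2 := Finset.card_inter_add_card_sdiff A₀ (Finset.Icc 1 j)
      have h3 := Finset.card_le_card hsub2
      omega
    set A₁ := insert x A₀ with hA₁def
    have hA₁sub : A₁ ⊆ Finset.Icc 1 n := Finset.insert_subset hxIcc hsub
    have hA₁mem : A₁ ∈ 𝓐 := hM A₀ hA₀mem A₁ (Finset.subset_insert x A₀) hA₁sub
    have hcardA₁ : ∀ j, (A₁ ∩ Finset.Icc 1 j).card =
        if x ≤ j then (A₀ ∩ Finset.Icc 1 j).card + 1 else (A₀ ∩ Finset.Icc 1 j).card := by
      intro j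
      by_cases h : x ≤ j
      · rw [if_pos h, hA₁def, Finset.insert_inter_of_mem (Finset.mem_Icc.mpr ⟨hx1, h⟩),
          Finset.card_insert_of_notMem (fun hc => hxA₀ (Finset.mem_inter.mp hc).1)]
      · rw [if_neg h, hA₁def,
          Finset.insert_inter_of_notMem (fun hc => h (Finset.mem_Icc.mp hc).2)]
    have hdom₁ : ∀ j, j ≤ n →
        (A₁ ∩ Finset.Icc 1 j).card ≤ (A' ∩ Finset.Icc 1 j).card := by
      intro j hj
      rw [hcardA₁ j]
      split_ifs with h
      · exact hstrict j h hj
      · exact hdom j hj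
    have hlt : (∑ j ∈ Finset.range (n + 1),
          ((A' ∩ Finset.Icc 1 j).card - (A₁ ∩ Finset.Icc 1 j).card)) <
        (∑ j ∈ Finset.range (n + 1),
          ((A' ∩ Finset.Icc 1 j).card - (A₀ ∩ Finset.Icc 1 j).card)) := by
      apply Finset.sum_lt_sum
      · intro j _
        rw [hcardA₁ j]
        split_ifs <;> omega
      · refine ⟨n, Finset.mem_range.mpr (Nat.lt_succ_self n), ?_⟩
        have h1 := hstrict n hxn le_rfl
        rw [hcardA₁ n, if_pos hxn]
        omega
    exact ih _ (lt_of_lt_of_le hlt hmeas) A₁ hA₁mem hA₁sub hdom₁ le_rfl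
  · -- equal cardinality: perform one shift
    have hne1 : (A' \ A₀).Nonempty := by
      rw [Finset.sdiff_nonempty]
      intro hsub2
      exact heq (Finset.eq_of_subset_of_card_le hsub2 (le_of_eq hcard)).symm
    have hne2 : (A₀ \ A').Nonempty := by
      rw [Finset.sdiff_nonempty]
      intro hsub2
      exact heq (Finset.eq_of_subset_of_card_le hsub2 (ge_of_eq hcard))
    set b := (A' \ A₀).min' hne1 with hbdef
    set aa := (A₀ \ A').min' hne2 with haadef
    have hbmem := (A' \ A₀).min'_mem hne1
    have haamem := (A₀ \ A').min'_mem hne2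
    have hbA' : b ∈ A' := (Finset.mem_sdiff.mp hbmem).1
    have hbA₀ : b ∉ A₀ := (Finset.mem_sdiff.mp hbmem).2
    have haaA₀ : aa ∈ A₀ := (Finset.mem_sdiff.mp haamem).1
    have haaA' : aa ∉ A' := (Finset.mem_sdiff.mp haamem).2
    have hb1 : 1 ≤ b := (Finset.mem_Icc.mp (hA'sub hbA')).1
    have hbn : b ≤ n := (Finset.mem_Icc.mp (hA'sub hbA')).2
    have haa1 : 1 ≤ aa := (Finset.mem_Icc.mp (hsub haaA₀)).1
    have haan : aa ≤ n := (Finset.mem_Icc.mp (hsub haaA₀)).2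
    have hba : b < aa := by
      by_contra hcon
      have haab : aa < b := by
        rcases Nat.lt_or_ge aa b with h | h
        · exact h
        · have : aa ≠ b := fun hc => hbA₀ (hc ▸ haaA₀)
          omega
      have hsub3 : A' ∩ Finset.Icc 1 aa ⊆ (A₀ ∩ Finset.Icc 1 aa).erase aa := by
        intro y hy
        have hyA' : y ∈ A' := (Finset.mem_inter.mp hy).1
        have hyIcc := (Finset.mem_inter.mp hy).2
        have hyle : y ≤ aa := (Finset.mem_Icc.mp hyIcc).2
        have hyA₀ : y ∈ A₀ := by
          by_contra hc
          have : b ≤ y := Finset.min'_le _ _ (Finset.mem_sdiff.mpr ⟨hyA', hc⟩)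
          omega
        refine Finset.mem_erase.mpr ⟨fun hc => haaA' (hc ▸ hyA'), Finset.mem_inter.mpr ⟨hyA₀, hyIcc⟩⟩
      have haainter : aa ∈ A₀ ∩ Finset.Icc 1 aa :=
        Finset.mem_inter.mpr ⟨haaA₀, Finset.mem_Icc.mpr ⟨haa1, le_rfl⟩⟩
      have h1 := Finset.card_le_card hsub3
      rw [Finset.card_erase_of_mem haainter] at h1
      have h2 := hdom aa haan
      have h3 : 1 ≤ (A₀ ∩ Finset.Icc 1 aa).card := Finset.card_pos.mpr ⟨aa, haainter⟩
      omega
    set A₁ := insert b (A₀.erase aa) with hA₁def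
    have hA₁mem : A₁ ∈ 𝓐 := aux_mem_of_shift hS hA₀mem hb1 hba haan haaA₀ hbA₀
    have hA₁sub : A₁ ⊆ Finset.Icc 1 n :=
      Finset.insert_subset (hA'sub hbA') ((Finset.erase_subset _ _).trans hsub)
    have herase : ∀ j, (A₀.erase aa) ∩ Finset.Icc 1 j = (A₀ ∩ Finset.Icc 1 j).erase aa := by
      intro j
      ext y
      simp only [Finset.mem_inter, Finset.mem_erase]
      tauto
    have hcardA₁ : ∀ j, (A₁ ∩ Finset.Icc 1 j).card =
        if b ≤ j ∧ j < aa then (A₀ ∩ Finset.Icc 1 j).card + 1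
        else (A₀ ∩ Finset.Icc 1 j).card := by
      intro j
      have hbnotmem : b ∉ (A₀ ∩ Finset.Icc 1 j).erase aa := by
        intro hc
        exact hbA₀ (Finset.mem_inter.mp (Finset.mem_of_mem_erase hc)).1
      by_cases hbj : b ≤ j
      · have hA₁j : A₁ ∩ Finset.Icc 1 j = insert b ((A₀ ∩ Finset.Icc 1 j).erase aa) := by
          rw [hA₁def, Finset.insert_inter_of_mem (Finset.mem_Icc.mpr ⟨hb1, hbj⟩), herase j]
        rw [hA₁j, Finset.card_insert_of_notMem hbnotmem]
        by_cases haaj : j < aa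
        · rw [if_pos ⟨hbj, haaj⟩, Finset.erase_eq_of_notMem]
          intro hc
          exact absurd ((Finset.mem_Icc.mp (Finset.mem_inter.mp hc).2).2) (by omega)
        · rw [if_neg (fun hc => haaj hc.2)]
          have haainter : aa ∈ A₀ ∩ Finset.Icc 1 j :=
            Finset.mem_inter.mpr ⟨haaA₀, Finset.mem_Icc.mpr ⟨haa1, by omega⟩⟩
          rw [Finset.card_erase_of_mem haainter]
          have : 1 ≤ (A₀ ∩ Finset.Icc 1 j).card := Finset.card_pos.mpr ⟨aa, haainter⟩
          omega
      · have hA₁j : A₁ ∩ Finset.Icc 1 j = (A₀ ∩ Finset.Icc 1 j).erase aa := by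
          rw [hA₁def, Finset.insert_inter_of_notMem
            (fun hc => hbj (Finset.mem_Icc.mp hc).2), herase j]
        rw [hA₁j, Finset.erase_eq_of_notMem, if_neg (fun hc => hbj hc.1)]
        intro hc
        have := (Finset.mem_Icc.mp (Finset.mem_inter.mp hc).2).2
        omega
    have hdomstrict : ∀ j, b ≤ j → j < aa → j ≤ n →
        (A₀ ∩ Finset.Icc 1 j).card + 1 ≤ (A' ∩ Finset.Icc 1 j).card := by
      intro j hbj hjaa hjn
      have hsub4 : insert b (A₀ ∩ Finset.Icc 1 j) ⊆ A' ∩ Finset.Icc 1 j := by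
        intro y hy
        rcases Finset.mem_insert.mp hy with hyb | hymem
        · subst hyb
          exact Finset.mem_inter.mpr ⟨hbA', Finset.mem_Icc.mpr ⟨hb1, hbj⟩⟩
        · have hyA₀ : y ∈ A₀ := (Finset.mem_inter.mp hymem).1
          have hyle : y ≤ j := (Finset.mem_Icc.mp (Finset.mem_inter.mp hymem).2).2
          have hyA' : y ∈ A' := by
            by_contra hc
            have : aa ≤ y := Finset.min'_le _ _ (Finset.mem_sdiff.mpr ⟨hyA₀, hc⟩)
            omega
          exact Finset.mem_inter.mpr ⟨hyA', (Finset.mem_inter.mp hymem).2⟩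
      have h1 := Finset.card_le_card hsub4
      rw [Finset.card_insert_of_notMem
        (fun hc => hbA₀ (Finset.mem_inter.mp hc).1)] at h1
      exact h1
    have hdom₁ : ∀ j, j ≤ n →
        (A₁ ∩ Finset.Icc 1 j).card ≤ (A' ∩ Finset.Icc 1 j).card := by
      intro j hj
      rw [hcardA₁ j]
      split_ifs with h
      · exact hdomstrict j h.1 h.2 hj
      · exact hdom j hj
    have hlt : (∑ j ∈ Finset.range (n + 1),
          ((A' ∩ Finset.Icc 1 j).card - (A₁ ∩ Finset.Icc 1 j).card)) <
        (∑ j ∈ Finset.range (n + 1),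
          ((A' ∩ Finset.Icc 1 j).card - (A₀ ∩ Finset.Icc 1 j).card)) := by
      apply Finset.sum_lt_sum
      · intro j _
        rw [hcardA₁ j]
        split_ifs <;> omega
      · refine ⟨b, Finset.mem_range.mpr (by omega), ?_⟩
        have h1 := hdomstrict b le_rfl hba hbn
        rw [hcardA₁ b, if_pos ⟨le_rfl, hba⟩]
        omega
    exact ih _ (lt_of_lt_of_le hlt hmeas) A₁ hA₁mem hA₁sub hdom₁ le_rfl

/-- The key step: with a witness `A₀ ∈ 𝓐` not reaching level `a+1`, every set `B`
cross `t`-intersecting with `𝓐` reaches level `2t − a`. -/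
lemma aux_key (n t a : ℕ) (ht : 1 ≤ t) (𝓐 : Finset (Finset ℕ))
    (hS : Shifted n 𝓐) (hM : InclMax n 𝓐)
    (A₀ : Finset ℕ) (hA₀ : A₀ ∈ 𝓐) (hA₀sub : A₀ ⊆ Finset.Icc 1 n)
    (hA₀lvl : ¬ Reaches n (a + 1) A₀)
    (B : Finset ℕ) (hB : ∀ A ∈ 𝓐, t ≤ (A ∩ B).card)
    (hat : a < 2 * t) :
    Reaches n (2 * t - a) B := by
  by_contra hnB
  rw [Reaches] at hA₀lvl hnB
  push_neg at hA₀lvl hnB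
  set r := Nat.findGreatest (fun j => (B ∩ Finset.Icc 1 j).card ≤ t - 1) n with hrdef
  have hr_le : r ≤ n := Nat.findGreatest_le n
  have hBr : (B ∩ Finset.Icc 1 r).card ≤ t - 1 :=
    Nat.findGreatest_spec (P := fun j => (B ∩ Finset.Icc 1 j).card ≤ t - 1)
      (Nat.zero_le n) (by simp)
  have hgt : ∀ j, r < j → j ≤ n → t ≤ (B ∩ Finset.Icc 1 j).card := by
    intro j h1 h2
    have := Nat.findGreatest_is_greatest (P := fun j => (B ∩ Finset.Icc 1 j).card ≤ t - 1) h1 h2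
    omega
  have hBr_eq : r < n → (B ∩ Finset.Icc 1 r).card = t - 1 := by
    intro hrn
    have h1 := hgt (r + 1) (Nat.lt_succ_self r) (by omega)
    have h2 : B ∩ Finset.Icc 1 (r + 1) ⊆ insert (r + 1) (B ∩ Finset.Icc 1 r) := by
      intro y hy
      have hyB : y ∈ B := (Finset.mem_inter.mp hy).1
      have hyI := Finset.mem_Icc.mp (Finset.mem_inter.mp hy).2
      by_cases hc : y = r + 1
      · exact Finset.mem_insert.mpr (Or.inl hc)
      · exact Finset.mem_insert.mpr (Or.inr (Finset.mem_inter.mpr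
          ⟨hyB, Finset.mem_Icc.mpr ⟨hyI.1, by omega⟩⟩))
    have h3 := Finset.card_le_card h2
    have h4 := Finset.card_insert_le (r + 1) (B ∩ Finset.Icc 1 r)
    omega
  set A' := (Finset.Icc 1 n \ B) ∪ (B ∩ Finset.Icc 1 r) with hA'def
  have hA'sub : A' ⊆ Finset.Icc 1 n := by
    apply Finset.union_subset (Finset.sdiff_subset)
    exact (Finset.inter_subset_right).trans (Finset.Icc_subset_Icc_right hr_le)
  have hpartcard : ∀ j, j ≤ n → (A' ∩ Finset.Icc 1 j).card =
      (j - (B ∩ Finset.Icc 1 j).card) + (B ∩ Finset.Icc 1 (min r j)).card := by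
    intro j hj
    have hset : A' ∩ Finset.Icc 1 j =
        (Finset.Icc 1 j \ B) ∪ (B ∩ Finset.Icc 1 (min r j)) := by
      ext y
      simp only [hA'def, Finset.mem_inter, Finset.mem_union, Finset.mem_sdiff,
        Finset.mem_Icc, le_min_iff, min_le_iff]
      by_cases hyB : y ∈ B <;> simp [hyB] <;> omega
    rw [hset, Finset.card_union_of_disjoint]
    · have h1 := Finset.card_inter_add_card_sdiff (Finset.Icc 1 j) B
      have h2 : (Finset.Icc 1 j ∩ B).card = (B ∩ Finset.Icc 1 j).card := by
        rw [Finset.inter_comm]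
      have h3 : (Finset.Icc 1 j).card = j := by
        rw [Nat.card_Icc]; omega
      omega
    · rw [Finset.disjoint_left]
      intro y hy hy2
      exact (Finset.mem_sdiff.mp hy).2 (Finset.mem_inter.mp hy2).1
  have hcle : ∀ j, (A₀ ∩ Finset.Icc 1 j).card ≤ j := by
    intro j
    calc (A₀ ∩ Finset.Icc 1 j).card ≤ (Finset.Icc 1 j).card :=
          Finset.card_le_card Finset.inter_subset_right
      _ = j := by rw [Nat.card_Icc]; omega
  have hdom : ∀ j, j ≤ n → (A₀ ∩ Finset.Icc 1 j).card ≤ (A' ∩ Finset.Icc 1 j).card := by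
    intro j hj
    rw [hpartcard j hj]
    by_cases hjr : j ≤ r
    · rw [min_eq_right hjr]
      have := hcle j
      have hBj : (B ∩ Finset.Icc 1 j).card ≤ j := by
        calc (B ∩ Finset.Icc 1 j).card ≤ (Finset.Icc 1 j).card :=
              Finset.card_le_card Finset.inter_subset_right
          _ = j := by rw [Nat.card_Icc]; omega
      omega
    · push_neg at hjr
      rw [min_eq_left (le_of_lt hjr)]
      have hrn : r < n := lt_of_lt_of_le hjr hj
      have hbr := hBr_eq hrn
      have hA₀j := hA₀lvl j hj
      have hBj := hnB j hj
      have hBjle : (B ∩ Finset.Icc 1 j).card ≤ j := by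
        calc (B ∩ Finset.Icc 1 j).card ≤ (Finset.Icc 1 j).card :=
              Finset.card_le_card Finset.inter_subset_right
          _ = j := by rw [Nat.card_Icc]; omega
      omega
  have hA'mem : A' ∈ 𝓐 :=
    aux_compression n 𝓐 hS hM A' hA'sub _ A₀ hA₀ hA₀sub hdom le_rfl
  have hinter : A' ∩ B = B ∩ Finset.Icc 1 r := by
    ext y
    simp only [hA'def, Finset.mem_inter, Finset.mem_union, Finset.mem_sdiff]
    tauto
  have := hB A' hA'mem
  rw [hinter] at this
  omega

/-- for nonempty shifted inclusion-maximal cross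
`t`-intersecting families, `λ(A) + λ(B) ≥ 2t`. -/
theorem statement_9 (n t : ℕ) (ht : 1 ≤ t) (hn : t ≤ n)
    (𝓐 𝓑 : Finset (Finset ℕ))
    (hA : 𝓐 ⊆ (Finset.Icc 1 n).powerset) (hB : 𝓑 ⊆ (Finset.Icc 1 n).powerset)
    (hAne : 𝓐.Nonempty) (hBne : 𝓑.Nonempty)
    (hSA : Shifted n 𝓐) (hSB : Shifted n 𝓑)
    (hMA : InclMax n 𝓐) (hMB : InclMax n 𝓑)
    (hcross : CrossIntersecting t 𝓐 𝓑) :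
    2 * t ≤ lam n 𝓐 + lam n 𝓑 := by
  obtain ⟨A₁, hA₁⟩ := hAne
  obtain ⟨B₁, hB₁⟩ := hBne
  have hcardB : ∀ B ∈ 𝓑, t ≤ B.card := fun B hBm =>
    le_trans (hcross A₁ hA₁ B hBm) (Finset.card_le_card Finset.inter_subset_right)
  have hcardA : ∀ A ∈ 𝓐, t ≤ A.card := fun A hAm =>
    le_trans (hcross A hAm B₁ hB₁) (Finset.card_le_card Finset.inter_subset_left)
  have hBlow : 2 * t - n ≤ lam n 𝓑 :=
    aux_le_lam (by omega) (fun F hF =>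
      aux_reaches_card (hcardB F hF) (Finset.mem_powerset.mp (hB hF)))
  have hAlow : 2 * t - n ≤ lam n 𝓐 :=
    aux_le_lam (by omega) (fun F hF =>
      aux_reaches_card (hcardA F hF) (Finset.mem_powerset.mp (hA hF)))
  have hAle : lam n 𝓐 ≤ n := aux_lam_le 𝓐
  by_cases hcase : 2 * t ≤ lam n 𝓐
  · omega
  by_cases hcase2 : lam n 𝓐 = n
  · omega
  have hAlt : lam n 𝓐 < n := lt_of_le_of_ne hAle hcase2
  obtain ⟨A₀, hA₀, hA₀lvl⟩ := aux_lam_witness hAlt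
  have hreach : ∀ B ∈ 𝓑, Reaches n (2 * t - lam n 𝓐) B := fun B hBm =>
    aux_key n t (lam n 𝓐) ht 𝓐 hSA hMA A₀ hA₀ (Finset.mem_powerset.mp (hA hA₀)) hA₀lvl B
      (fun A hAm => hcross A hAm B hBm) (by omega)
  have hBge : 2 * t - lam n 𝓐 ≤ lam n 𝓑 := aux_le_lam (by omega) hreach
  omega
end
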